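/- arXiv:2110.10815 — 8 statements merged into one kernel-verified Lean document; each statement's English description precedes it below -/
import Mathlib

section
/- Let λ, d > 0 and η > 0, and let the sequences (x_t), (y_t) be defined by x_0 = y_0 = 0, x_{t+1} = x_t + η d (λ − x_t y_t), y_{t+1} = y_t + η x_t (λ − x_t y_t). Then for every t ≥ 0, y_t = x_t²/(2d) − S_t/(2d), where S_0 = 0 and S_t = Σ_{i=1}^t (x_i − x_{i−1})². -/
/-! Since `Δ(x²) = 2 x Δx + (Δx)²` and the dynamics give `d Δy = x Δx`, the quantity
`2 d y_t - x_t² + S_t` is conserved, and it vanishes at `t = 0`. -/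

open Finset

theorem two_mul_mul_sub_eq_sq_sub_sq_sub_sum {R : Type*} [CommRing R] (c : R) (x y : ℕ → R)
    (h : ∀ t, c * (y (t + 1) - y t) = x t * (x (t + 1) - x t)) (t : ℕ) :
    2 * c * (y t - y 0) = x t ^ 2 - x 0 ^ 2 - ∑ i ∈ range t, (x (i + 1) - x i) ^ 2 := by
  induction t with
  | zero => simp
  | succ n ih =>
    rw [sum_range_succ]
    linear_combination ih + 2 * h n

theorem stmt_0_general (lam d η : ℝ) (hd : 0 < d)
    (x y : ℕ → ℝ) (hx0 : x 0 = 0) (hy0 : y 0 = 0)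
    (hx : ∀ t, x (t + 1) = x t + η * d * (lam - x t * y t))
    (hy : ∀ t, y (t + 1) = y t + η * x t * (lam - x t * y t)) :
    ∀ t, y t = (x t) ^ 2 / (2 * d)
      - (∑ i ∈ Finset.range t, (x (i + 1) - x i) ^ 2) / (2 * d) := by
  intro t
  have hstep : ∀ t, d * (y (t + 1) - y t) = x t * (x (t + 1) - x t) := fun t => by
    rw [hx, hy]; ring
  have key := two_mul_mul_sub_eq_sq_sub_sq_sub_sum d x y hstep t
  rw [hx0, hy0] at key
  field_simp
  linear_combination key

/-- Discretized FA dynamics: with `x 0 = y 0 = 0`,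
`x (t+1) = x t + η d (λ - x t * y t)`, `y (t+1) = y t + η * x t * (λ - x t * y t)`,
we have `y t = x t ^ 2 / (2 d) - S t / (2 d)` where
`S t = ∑_{i=1}^t (x i - x (i-1))^2`. -/
theorem stmt_0 (lam d η : ℝ) (hlam : 0 < lam) (hd : 0 < d) (hη : 0 < η)
    (x y : ℕ → ℝ) (hx0 : x 0 = 0) (hy0 : y 0 = 0)
    (hx : ∀ t, x (t + 1) = x t + η * d * (lam - x t * y t))
    (hy : ∀ t, y (t + 1) = y t + η * x t * (lam - x t * y t)) :
    ∀ t, y t = (x t) ^ 2 / (2 * d)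
      - (∑ i ∈ Finset.range t, (x (i + 1) - x i) ^ 2) / (2 * d) :=
  stmt_0_general lam d η hd x y hx0 hy0 hx hy
end

section
/- Let λ, d > 0 and η > 0, and let the sequences (x_t), (y_t) be defined by x_0 = y_0 = 0, x_{t+1} = x_t + η d (λ − x_t y_t), y_{t+1} = y_t + η x_t (λ − x_t y_t). Then for every t ≥ 0, x_{t+1} = x_t + (η/2)(2dλ − x_t³ + x_t S_t), where S_0 = 0 and S_t = Σ_{i=1}^t (x_i − x_{i−1})². -/
/-! Since `x_t (x_{t+1} - x_t) = d (y_{t+1} - y_t)`, telescoping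
`x_{t+1}² - x_t² = 2 x_t (x_{t+1} - x_t) + (x_{t+1} - x_t)²` gives the discrete conservation law
`x_t² = 2 d y_t + S_t`; substituting `2 d x_t y_t = x_t³ - x_t S_t` into the recurrence for `x`
gives the claim. -/

open Finset

theorem sq_eq_add_sum_sq_sub_of_mul_sub_eq {R : Type*} [CommRing R] (d : R) (x y : ℕ → R)
    (h : ∀ t, x t * (x (t + 1) - x t) = d * (y (t + 1) - y t)) (t : ℕ) :
    x t ^ 2 = x 0 ^ 2 + 2 * d * (y t - y 0) + ∑ i ∈ range t, (x (i + 1) - x i) ^ 2 := by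
  induction t with
  | zero => simp
  | succ t ih =>
    rw [sum_range_succ]
    linear_combination ih + 2 * h t

theorem stmt_1_general (lam d η : ℝ)
    (x y : ℕ → ℝ) (hx0 : x 0 = 0) (hy0 : y 0 = 0)
    (hx : ∀ t, x (t + 1) = x t + η * d * (lam - x t * y t))
    (hy : ∀ t, y (t + 1) = y t + η * x t * (lam - x t * y t)) :
    ∀ t, x (t + 1) = x t + (η / 2) *
      (2 * d * lam - (x t) ^ 3 + x t * (∑ i ∈ Finset.range t, (x (i + 1) - x i) ^ 2)) := by
  have conservation (t : ℕ) :
      x t ^ 2 = 2 * d * y t + ∑ i ∈ range t, (x (i + 1) - x i) ^ 2 := by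
    have := sq_eq_add_sum_sq_sub_of_mul_sub_eq d x y
      (fun t ↦ by rw [hx t, hy t]; ring) t
    rwa [hx0, hy0, sub_zero, zero_pow two_ne_zero, zero_add] at this
  intro t
  rw [hx t]
  linear_combination (η / 2 * x t) * conservation t

/-- Discretized FA dynamics: with `x 0 = y 0 = 0`, the recurrence for `x` can be
rewritten as `x (t+1) = x t + (η/2) * (2 d λ - (x t)^3 + x t * S t)`, where
`S t = ∑_{i=1}^t (x i - x (i-1))^2`. -/
theorem stmt_1 (lam d η : ℝ) (hlam : 0 < lam) (hd : 0 < d) (hη : 0 < η)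
    (x y : ℕ → ℝ) (hx0 : x 0 = 0) (hy0 : y 0 = 0)
    (hx : ∀ t, x (t + 1) = x t + η * d * (lam - x t * y t))
    (hy : ∀ t, y (t + 1) = y t + η * x t * (lam - x t * y t)) :
    ∀ t, x (t + 1) = x t + (η / 2) *
      (2 * d * lam - (x t) ^ 3 + x t * (∑ i ∈ Finset.range t, (x (i + 1) - x i) ^ 2)) :=
  stmt_1_general lam d η x y hx0 hy0 hx hy
end

section
/- Let λ, d > 0, let α_∞ > 0, and let ℓ_{α_∞} denote the unique positive root of 2dλ − x³ + α_∞ x. If η ≤ 2/(3 ℓ_{α_∞}²), then the map f(x; α) = x + (η/2)(2dλ − x³ + αx) maps the interval [0, ℓ_{α_∞}] into itself for every α ∈ [0, α_∞], and f(x; α) ≤ f(x′; α′) whenever 0 ≤ x ≤ x′ ≤ ℓ_{α_∞} and 0 ≤ α ≤ α′ ≤ α_∞. -/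
/-!
Write `f(x; α) = x + (η/2)(c - x³ + αx)`. Then
`f(x'; α') - f(x; α) = (x' - x)(1 + (η/2)(α' - (x² + xx' + x'²))) + (η/2)(α' - α)x`,
and on `[0, ℓ]` the step-size bound `η · 3ℓ² ≤ 2` makes the first factor nonnegative, so `f` is
jointly monotone. Invariance of `[0, ℓ]` follows by comparing with the two extreme values:
`f(0; 0) = ηc/2 ≥ 0` and `f(ℓ; α∞) = ℓ` because `ℓ` is a root of `c - x³ + α∞ x`.
-/

/-- The map `f(x; α)` with the constant `2dλ` abbreviated to `c`. -/
noncomputable def cubicStep (c η α x : ℝ) : ℝ := x + (η / 2) * (c - x ^ 3 + α * x)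

lemma cubicStep_sub_cubicStep (c η α α' x x' : ℝ) :
    cubicStep c η α' x' - cubicStep c η α x =
      (x' - x) * (1 + (η / 2) * (α' - (x ^ 2 + x * x' + x' ^ 2))) + (η / 2) * ((α' - α) * x) := by
  unfold cubicStep
  ring

lemma cubicStep_le_cubicStep {c η ℓ α α' x x' : ℝ} (hη : 0 ≤ η) (hηℓ : η * (3 * ℓ ^ 2) ≤ 2)
    (hx : 0 ≤ x) (hxx' : x ≤ x') (hx'ℓ : x' ≤ ℓ) (hα : 0 ≤ α) (hαα' : α ≤ α') :
    cubicStep c η α x ≤ cubicStep c η α' x' := by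
  have hx' : 0 ≤ x' := hx.trans hxx'
  have hsum : x ^ 2 + x * x' + x' ^ 2 ≤ 3 * ℓ ^ 2 := by nlinarith
  have hfactor : 0 ≤ 1 + (η / 2) * (α' - (x ^ 2 + x * x' + x' ^ 2)) := by
    nlinarith [mul_nonneg hη (hα.trans hαα'), mul_le_mul_of_nonneg_left hsum hη]
  have hdrift : 0 ≤ (η / 2) * ((α' - α) * x) := by
    have := sub_nonneg.mpr hαα'
    positivity
  have := cubicStep_sub_cubicStep c η α α' x x'
  nlinarith [mul_nonneg (sub_nonneg.mpr hxx') hfactor]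

lemma cubicStep_mapsTo_Icc {c η ℓ αmax α : ℝ} (hc : 0 ≤ c) (hη : 0 ≤ η)
    (hηℓ : η * (3 * ℓ ^ 2) ≤ 2) (hℓ : c - ℓ ^ 3 + αmax * ℓ = 0) (hα : 0 ≤ α) (hαmax : α ≤ αmax) :
    Set.MapsTo (cubicStep c η α) (Set.Icc 0 ℓ) (Set.Icc 0 ℓ) := by
  rintro x ⟨hx, hxℓ⟩
  have hlow : cubicStep c η 0 0 ≤ cubicStep c η α x :=
    cubicStep_le_cubicStep hη hηℓ le_rfl hx hxℓ le_rfl hα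
  have hhigh : cubicStep c η α x ≤ cubicStep c η αmax ℓ :=
    cubicStep_le_cubicStep hη hηℓ hx hxℓ le_rfl hα hαmax
  have hℓ_fixed : cubicStep c η αmax ℓ = ℓ := by simp [cubicStep, hℓ]
  have h0 : 0 ≤ cubicStep c η 0 0 := by norm_num [cubicStep]; positivity
  exact ⟨h0.trans hlow, hℓ_fixed ▸ hhigh⟩

theorem stmt_5_general (lam d η : ℝ) (hlam : 0 < lam) (hd : 0 < d) (hη : 0 < η)
    (αinf : ℝ)
    (ℓ : ℝ)
    (hℓroot : 2 * d * lam - ℓ ^ 3 + αinf * ℓ = 0)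
    (hηℓ : η ≤ 2 / (3 * ℓ ^ 2)) :
    (∀ α, 0 ≤ α → α ≤ αinf →
      Set.MapsTo (fun x : ℝ => x + (η / 2) * (2 * d * lam - x ^ 3 + α * x))
        (Set.Icc 0 ℓ) (Set.Icc 0 ℓ)) ∧
    (∀ x x' α α' : ℝ, 0 ≤ x → x ≤ x' → x' ≤ ℓ → 0 ≤ α → α ≤ α' → α' ≤ αinf →
      x + (η / 2) * (2 * d * lam - x ^ 3 + α * x)
        ≤ x' + (η / 2) * (2 * d * lam - x' ^ 3 + α' * x')) := by
  have hstep : η * (3 * ℓ ^ 2) ≤ 2 := mul_le_of_le_div₀ zero_le_two (by positivity) hηℓ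
  have hc : 0 ≤ 2 * d * lam := by positivity
  exact ⟨fun α hα hαinf => cubicStep_mapsTo_Icc hc hη.le hstep hℓroot hα hαinf,
    fun x x' α α' hx hxx' hx'ℓ hα hαα' _ =>
      cubicStep_le_cubicStep hη.le hstep hx hxx' hx'ℓ hα hαα'⟩

/-- If `η ≤ 2/(3 ℓ_{α∞}²)`, where `ℓ_{α∞}` is the unique positive root of
`2dλ - x³ + α∞ x`, then `f(x; α) = x + (η/2)(2dλ - x³ + αx)` maps `[0, ℓ_{α∞}]`
into itself for every `α ∈ [0, α∞]`, and is jointly monotone: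
`f(x; α) ≤ f(x'; α')` whenever `0 ≤ x ≤ x' ≤ ℓ_{α∞}` and `0 ≤ α ≤ α' ≤ α∞`. -/
theorem stmt_5 (lam d η : ℝ) (hlam : 0 < lam) (hd : 0 < d) (hη : 0 < η)
    (αinf : ℝ) (hαinf : 0 < αinf)
    (ℓ : ℝ) (hℓpos : 0 < ℓ)
    (hℓroot : 2 * d * lam - ℓ ^ 3 + αinf * ℓ = 0)
    (hℓuniq : ∀ z, 0 < z → 2 * d * lam - z ^ 3 + αinf * z = 0 → z = ℓ)
    (hηℓ : η ≤ 2 / (3 * ℓ ^ 2)) :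
    (∀ α, 0 ≤ α → α ≤ αinf →
      Set.MapsTo (fun x : ℝ => x + (η / 2) * (2 * d * lam - x ^ 3 + α * x))
        (Set.Icc 0 ℓ) (Set.Icc 0 ℓ)) ∧
    (∀ x x' α α' : ℝ, 0 ≤ x → x ≤ x' → x' ≤ ℓ → 0 ≤ α → α ≤ α' → α' ≤ αinf →
      x + (η / 2) * (2 * d * lam - x ^ 3 + α * x)
        ≤ x' + (η / 2) * (2 * d * lam - x' ^ 3 + α' * x')) :=
  stmt_5_general lam d η hlam hd hη αinf ℓ hℓroot hηℓ
end

section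
/- Let λ, d > 0, let (α_t)_{t≥0} be an increasing sequence with 0 ≤ α_t ≤ α_∞ for all t, and let ℓ_{α_∞} be the unique positive root of 2dλ − x³ + α_∞ x. Define x_0 = 0 and x_{t+1} = x_t + (η/2)(2dλ − x_t³ + x_t α_t). If η ≤ 2/(3 ℓ_{α_∞}²), then for every t ≥ 0, 0 ≤ x_t ≤ x_{t+1} ≤ ℓ_{α_∞}; that is, the sequence (x_t) is nonnegative, increasing, and bounded above by ℓ_{α_∞}. -/
/-!
Write `f_a(x) = 2dλ - x³ + a x` for the drift, so that `x_{t+1} = x_t + (η/2) f_{α_t}(x_t)`.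
By induction, `0 ≤ x_t ≤ ℓ` and `f_{α_t}(x_t) ≥ 0`. The step cannot overshoot `ℓ`, because
`f_{α∞}(x) = (ℓ - x)(x² + ℓx + ℓ² - α∞)` and the second factor lies in `[0, 3ℓ²]`, so
`(η/2) f_{α_t}(x) ≤ (η/2) f_{α∞}(x) ≤ ℓ - x`. The drift stays nonnegative, because
`f_a(x + (η/2) f_a(x)) = f_a(x) (1 - (η/2)(x'² + x'x + x² - a))` with `x' = x + (η/2) f_a(x)`,
whose second factor is nonnegative for `η ≤ 2/(3ℓ²)`; raising `a` from `α_t` to `α_{t+1}` only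
increases it.
-/

namespace GradientFlowCubic

def drift (c a x : ℝ) : ℝ := c - x ^ 3 + x * a

variable {c a A η ℓ x : ℝ}

theorem drift_le_drift (hx : 0 ≤ x) (ha : a ≤ A) : drift c a x ≤ drift c A x := by
  unfold drift
  nlinarith

theorem drift_eq_mul_of_root (hroot : drift c A ℓ = 0) (x : ℝ) :
    drift c A x = (ℓ - x) * (x ^ 2 + ℓ * x + ℓ ^ 2 - A) := by
  unfold drift at *
  linear_combination hroot

theorem half_mul_le_one (hη : 0 ≤ η) (hηℓ : η ≤ 2 / (3 * ℓ ^ 2)) {Q : ℝ} (hQ : Q ≤ 3 * ℓ ^ 2) :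
    η / 2 * Q ≤ 1 := by
  rcases eq_or_ne ℓ 0 with rfl | hℓ
  · have hη0 : η = 0 := le_antisymm (by simpa using hηℓ) hη
    simp [hη0]
  · have h3 : 0 < 3 * ℓ ^ 2 := by positivity
    rw [le_div_iff₀ h3] at hηℓ
    nlinarith [mul_le_mul_of_nonneg_left hQ hη]

theorem step_le_root (hη : 0 ≤ η) (hηℓ : η ≤ 2 / (3 * ℓ ^ 2)) (hc : 0 ≤ c) (hℓ : 0 < ℓ)
    (hroot : drift c A ℓ = 0) (ha0 : 0 ≤ a) (ha : a ≤ A) (hx0 : 0 ≤ x) (hxℓ : x ≤ ℓ) :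
    x + η / 2 * drift c a x ≤ ℓ := by
  have hAℓ : A ≤ ℓ ^ 2 := by
    unfold drift at hroot
    nlinarith
  have hQ : η / 2 * (x ^ 2 + ℓ * x + ℓ ^ 2 - A) ≤ 1 :=
    half_mul_le_one hη hηℓ (by nlinarith)
  have : η / 2 * drift c a x ≤ ℓ - x :=
    calc η / 2 * drift c a x
        ≤ η / 2 * drift c A x := by gcongr; exact drift_le_drift hx0 ha
      _ = η / 2 * (x ^ 2 + ℓ * x + ℓ ^ 2 - A) * (ℓ - x) := by
          rw [drift_eq_mul_of_root hroot]; ring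
      _ ≤ ℓ - x := mul_le_of_le_one_left (by linarith) hQ
  linarith

theorem drift_step_nonneg (hη : 0 ≤ η) (hηℓ : η ≤ 2 / (3 * ℓ ^ 2)) (ha0 : 0 ≤ a)
    (hx0 : 0 ≤ x) (hyℓ : x + η / 2 * drift c a x ≤ ℓ) (hf : 0 ≤ drift c a x) :
    0 ≤ drift c a (x + η / 2 * drift c a x) := by
  set y := x + η / 2 * drift c a x with hy
  have hxy : x ≤ y := by have := mul_nonneg (by positivity : 0 ≤ η / 2) hf; linarith
  have hid : drift c a y = drift c a x * (1 - η / 2 * (y ^ 2 + y * x + x ^ 2 - a)) := by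
    rw [hy]; unfold drift; ring
  have hQ : η / 2 * (y ^ 2 + y * x + x ^ 2 - a) ≤ 1 :=
    half_mul_le_one hη hηℓ (by nlinarith)
  rw [hid]
  exact mul_nonneg hf (by linarith)

theorem iterate_invariant (hη : 0 ≤ η) (hηℓ : η ≤ 2 / (3 * ℓ ^ 2)) (hc : 0 ≤ c) (hℓ : 0 < ℓ)
    {α : ℕ → ℝ} (hαmono : Monotone α) (hαnonneg : ∀ t, 0 ≤ α t) (hαbd : ∀ t, α t ≤ A)
    (hroot : drift c A ℓ = 0) {x : ℕ → ℝ} (hx0 : x 0 = 0)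
    (hx : ∀ t, x (t + 1) = x t + η / 2 * drift c (α t) (x t)) :
    ∀ t, 0 ≤ x t ∧ x t ≤ ℓ ∧ 0 ≤ drift c (α t) (x t) := by
  intro t
  induction t with
  | zero => simp [hx0, drift, hc, hℓ.le]
  | succ t ih =>
    obtain ⟨hx0t, hxℓt, hft⟩ := ih
    have hle : x (t + 1) ≤ ℓ := by
      rw [hx]; exact step_le_root hη hηℓ hc hℓ hroot (hαnonneg t) (hαbd t) hx0t hxℓt
    have hge : x t ≤ x (t + 1) := by
      have := mul_nonneg (by positivity : 0 ≤ η / 2) hft; rw [hx]; linarith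
    have hf : 0 ≤ drift c (α t) (x (t + 1)) := by
      rw [hx] at hle ⊢; exact drift_step_nonneg hη hηℓ (hαnonneg t) hx0t hle hft
    exact ⟨hx0t.trans hge, hle,
      hf.trans (drift_le_drift (hx0t.trans hge) (hαmono t.le_succ))⟩

end GradientFlowCubic

open GradientFlowCubic in
theorem stmt_6_general (lam d η : ℝ) (hlam : 0 < lam) (hd : 0 < d) (hη : 0 < η)
    (αinf : ℝ) (α : ℕ → ℝ) (hαmono : Monotone α)
    (hαnonneg : ∀ t, 0 ≤ α t) (hαbd : ∀ t, α t ≤ αinf)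
    (ℓ : ℝ) (hℓpos : 0 < ℓ)
    (hℓroot : 2 * d * lam - ℓ ^ 3 + αinf * ℓ = 0)
    (x : ℕ → ℝ) (hx0 : x 0 = 0)
    (hx : ∀ t, x (t + 1) = x t + (η / 2) * (2 * d * lam - (x t) ^ 3 + x t * α t))
    (hηℓ : η ≤ 2 / (3 * ℓ ^ 2)) :
    ∀ t, 0 ≤ x t ∧ x t ≤ x (t + 1) ∧ x (t + 1) ≤ ℓ := by
  have hroot : drift (2 * d * lam) αinf ℓ = 0 := by rw [← hℓroot, drift]; ring
  have inv := iterate_invariant hη.le hηℓ (by positivity) hℓpos hαmono hαnonneg hαbd hroot hx0 hx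
  intro t
  obtain ⟨hxt, -, hft⟩ := inv t
  have hstep : 0 ≤ η / 2 * drift (2 * d * lam) (α t) (x t) := mul_nonneg (by positivity) hft
  refine ⟨hxt, ?_, (inv (t + 1)).2.1⟩
  rw [hx t]
  exact le_add_of_nonneg_right hstep

/-- With `(α_t)` increasing, `0 ≤ α_t ≤ α∞`, `x_0 = 0` and
`x_{t+1} = x_t + (η/2)(2dλ - x_t³ + x_t α_t)`, if `η ≤ 2/(3 ℓ_{α∞}²)` then the
sequence `(x_t)` is nonnegative, increasing, and bounded above by `ℓ_{α∞}`. -/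
theorem stmt_6 (lam d η : ℝ) (hlam : 0 < lam) (hd : 0 < d) (hη : 0 < η)
    (αinf : ℝ) (α : ℕ → ℝ) (hαmono : Monotone α)
    (hαnonneg : ∀ t, 0 ≤ α t) (hαbd : ∀ t, α t ≤ αinf)
    (ℓ : ℝ) (hℓpos : 0 < ℓ)
    (hℓroot : 2 * d * lam - ℓ ^ 3 + αinf * ℓ = 0)
    (hℓuniq : ∀ z, 0 < z → 2 * d * lam - z ^ 3 + αinf * z = 0 → z = ℓ)
    (x : ℕ → ℝ) (hx0 : x 0 = 0)
    (hx : ∀ t, x (t + 1) = x t + (η / 2) * (2 * d * lam - (x t) ^ 3 + x t * α t))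
    (hηℓ : η ≤ 2 / (3 * ℓ ^ 2)) :
    ∀ t, 0 ≤ x t ∧ x t ≤ x (t + 1) ∧ x (t + 1) ≤ ℓ :=
  stmt_6_general lam d η hlam hd hη αinf α hαmono hαnonneg hαbd ℓ hℓpos hℓroot x hx0 hx hηℓ
end

section
/- Let λ, d > 0, let (α_t)_{t≥0} be an increasing sequence with 0 ≤ α_t ≤ α_∞ for all t and α_t → α_∞, and let ℓ_{α_∞} be the unique positive root of 2dλ − x³ + α_∞ x. Define x_0 = 0 and x_{t+1} = x_t + (η/2)(2dλ − x_t³ + x_t α_t). If η ≤ 2/(3 ℓ_{α_∞}²), then x_t converges and its limit equals ℓ_{α_∞}. -/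
/-!
Write `D(x, a) = c - x³ + a x` with `c = 2dλ`. Along the iteration the three facts
`0 ≤ x_t ≤ ℓ` and `D(x_t, α_t) ≥ 0` propagate: the step size bound `η · 3ℓ² ≤ 2` keeps the
update from overshooting `ℓ`, and it also makes the factor in
`D(x_{t+1}, α_t) = D(x_t, α_t) (2 + η (α_t - (x_{t+1}² + x_t x_{t+1} + x_t²))) / 2`
nonnegative, while increasing `α_t` only increases `D`. Hence `(x_t)` is nondecreasing and
bounded by `ℓ`, so it converges; its limit is a positive root of `D(·, α_∞)`, i.e. `ℓ`.
-/

open Filter Topology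

section CubicIteration

variable {c η a A ℓ x : ℝ}

theorem cubic_step_le_root (hη : 0 ≤ η) (ha : 0 ≤ a) (haA : a ≤ A) (hℓ : 0 < ℓ)
    (hroot : c - ℓ ^ 3 + A * ℓ = 0) (hηℓ : η * (3 * ℓ ^ 2) ≤ 2) (hx : 0 ≤ x) (hxℓ : x ≤ ℓ) :
    x + η / 2 * (c - x ^ 3 + x * a) ≤ ℓ := by
  have hfactor : 0 ≤ 2 - η * (ℓ ^ 2 + ℓ * x + x ^ 2 - a) := by
    have hσ : ℓ ^ 2 + ℓ * x + x ^ 2 ≤ 3 * ℓ ^ 2 := by nlinarith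
    nlinarith [mul_le_mul_of_nonneg_left hσ hη, mul_nonneg hη ha]
  have hgap : ℓ - (x + η / 2 * (c - x ^ 3 + x * a)) =
      ((ℓ - x) * (2 - η * (ℓ ^ 2 + ℓ * x + x ^ 2 - a)) + η * ((A - a) * ℓ)) / 2 := by
    linear_combination (-η / 2) * hroot
  have : 0 ≤ (ℓ - x) * (2 - η * (ℓ ^ 2 + ℓ * x + x ^ 2 - a)) + η * ((A - a) * ℓ) :=
    add_nonneg (mul_nonneg (by linarith) hfactor)
      (mul_nonneg hη (mul_nonneg (by linarith) hℓ.le))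
  linarith

theorem cubic_drift_step_nonneg (hη : 0 ≤ η) (ha : 0 ≤ a) (hηℓ : η * (3 * ℓ ^ 2) ≤ 2)
    (hx : 0 ≤ x) (hxℓ : x ≤ ℓ) (hD : 0 ≤ c - x ^ 3 + x * a)
    (hyℓ : x + η / 2 * (c - x ^ 3 + x * a) ≤ ℓ) :
    0 ≤ c - (x + η / 2 * (c - x ^ 3 + x * a)) ^ 3 + (x + η / 2 * (c - x ^ 3 + x * a)) * a := by
  set y := x + η / 2 * (c - x ^ 3 + x * a) with hy
  have hxy : x ≤ y := by rw [hy]; nlinarith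
  have hfactor : 0 ≤ 2 + η * (a - (y ^ 2 + x * y + x ^ 2)) := by
    have hσ : y ^ 2 + x * y + x ^ 2 ≤ 3 * ℓ ^ 2 := by nlinarith
    nlinarith [mul_le_mul_of_nonneg_left hσ hη, mul_nonneg hη ha]
  have hfactorization : c - y ^ 3 + y * a =
      (c - x ^ 3 + x * a) * (2 + η * (a - (y ^ 2 + x * y + x ^ 2))) / 2 := by
    rw [hy]; ring
  rw [hfactorization]
  positivity

end CubicIteration

section CubicSequence

variable {c η A ℓ : ℝ} {α x : ℕ → ℝ}

theorem cubic_iterate_invariant (hη : 0 ≤ η) (hαmono : Monotone α) (hαnonneg : ∀ t, 0 ≤ α t)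
    (hαbd : ∀ t, α t ≤ A) (hℓ : 0 < ℓ) (hroot : c - ℓ ^ 3 + A * ℓ = 0)
    (hηℓ : η * (3 * ℓ ^ 2) ≤ 2)
    (hx : ∀ t, x (t + 1) = x t + η / 2 * (c - x t ^ 3 + x t * α t))
    (hinit : 0 ≤ x 0 ∧ x 0 ≤ ℓ ∧ 0 ≤ c - x 0 ^ 3 + x 0 * α 0) (t : ℕ) :
    0 ≤ x t ∧ x t ≤ ℓ ∧ 0 ≤ c - x t ^ 3 + x t * α t := by
  induction t with
  | zero => exact hinit
  | succ n ih =>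
    obtain ⟨hx0, hxℓ, hD⟩ := ih
    have hyℓ := cubic_step_le_root hη (hαnonneg n) (hαbd n) hℓ hroot hηℓ hx0 hxℓ
    have hDy := cubic_drift_step_nonneg hη (hαnonneg n) hηℓ hx0 hxℓ hD hyℓ
    have hy0 : 0 ≤ x (n + 1) := by rw [hx n]; nlinarith
    rw [← hx n] at hyℓ hDy
    refine ⟨hy0, hyℓ, ?_⟩
    nlinarith [hαmono n.le_succ]

theorem monotone_of_drift_nonneg (hη : 0 ≤ η)
    (hx : ∀ t, x (t + 1) = x t + η / 2 * (c - x t ^ 3 + x t * α t))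
    (hD : ∀ t, 0 ≤ c - x t ^ 3 + x t * α t) : Monotone x :=
  monotone_nat_of_le_succ fun t => by rw [hx t]; nlinarith [hD t]

theorem cubic_root_of_tendsto {L : ℝ} (hη : η ≠ 0)
    (hx : ∀ t, x (t + 1) = x t + η / 2 * (c - x t ^ 3 + x t * α t))
    (hxL : Tendsto x atTop (𝓝 L)) (hαA : Tendsto α atTop (𝓝 A)) :
    c - L ^ 3 + A * L = 0 := by
  have hshift : Tendsto (fun t => x t + η / 2 * (c - x t ^ 3 + x t * α t)) atTop (𝓝 L) :=
    ((tendsto_add_atTop_iff_nat 1).2 hxL).congr hx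
  have hdrift : Tendsto (fun t => c - x t ^ 3 + x t * α t) atTop (𝓝 (c - L ^ 3 + L * A)) :=
    (tendsto_const_nhds.sub (hxL.pow 3)).add (hxL.mul hαA)
  have hrhs := hxL.add (hdrift.const_mul (η / 2))
  have hfixed := tendsto_nhds_unique hrhs hshift
  have : η / 2 * (c - L ^ 3 + L * A) = 0 := by linarith
  rcases mul_eq_zero.1 this with h | h
  · exact absurd h (by positivity)
  · linarith

end CubicSequence

/-- With `(α_t)` increasing, `0 ≤ α_t ≤ α∞`, `α_t → α∞`, `x_0 = 0` and
`x_{t+1} = x_t + (η/2)(2dλ - x_t³ + x_t α_t)`, if `η ≤ 2/(3 ℓ_{α∞}²)` then `(x_t)`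
converges, with limit `ℓ_{α∞}`, the unique positive root of `2dλ - x³ + α∞ x`. -/
theorem stmt_7 (lam d η : ℝ) (hlam : 0 < lam) (hd : 0 < d) (hη : 0 < η)
    (αinf : ℝ) (α : ℕ → ℝ) (hαmono : Monotone α)
    (hαnonneg : ∀ t, 0 ≤ α t) (hαbd : ∀ t, α t ≤ αinf)
    (hαlim : Filter.Tendsto α Filter.atTop (nhds αinf))
    (ℓ : ℝ) (hℓpos : 0 < ℓ)
    (hℓroot : 2 * d * lam - ℓ ^ 3 + αinf * ℓ = 0)
    (hℓuniq : ∀ z, 0 < z → 2 * d * lam - z ^ 3 + αinf * z = 0 → z = ℓ)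
    (x : ℕ → ℝ) (hx0 : x 0 = 0)
    (hx : ∀ t, x (t + 1) = x t + (η / 2) * (2 * d * lam - (x t) ^ 3 + x t * α t))
    (hηℓ : η ≤ 2 / (3 * ℓ ^ 2)) :
    Filter.Tendsto x Filter.atTop (nhds ℓ) := by
  have hηℓ' : η * (3 * ℓ ^ 2) ≤ 2 := (le_div_iff₀ (by positivity)).1 hηℓ
  have hc : 0 < 2 * d * lam := by positivity
  have hinit : 0 ≤ x 0 ∧ x 0 ≤ ℓ ∧ 0 ≤ 2 * d * lam - x 0 ^ 3 + x 0 * α 0 := by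
    simp only [hx0]; exact ⟨le_rfl, hℓpos.le, by linarith⟩
  have hinv := cubic_iterate_invariant hη.le hαmono hαnonneg hαbd hℓpos hℓroot hηℓ' hx hinit
  have hbdd : BddAbove (Set.range x) := ⟨ℓ, by rintro _ ⟨t, rfl⟩; exact (hinv t).2.1⟩
  have hxL := tendsto_atTop_ciSup
    (monotone_of_drift_nonneg hη.le hx fun t => (hinv t).2.2) hbdd
  have hLpos : 0 < ⨆ t, x t :=
    (show 0 < x 1 by rw [hx, hx0]; nlinarith).trans_le (le_ciSup hbdd 1)
  rwa [← hℓuniq _ hLpos (cubic_root_of_tendsto hη.ne' hx hxL hαlim)]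
end

section
/- Let λ, d > 0, P(x, S) = 2dλ − x³ + xS, and S* the unique positive solution of P(x, x) = 0. Then the set R = {(x, S) ∈ ℝ² : x ≥ 0, S ≥ 0, S ≤ x, P(x, S) ≥ 0} is a compact and convex subset of ℝ². -/
/-!
Write `c = 2dλ`. The region is closed and lies in a box, since `x³ - x² ≤ x³ - xS ≤ c` bounds `x`.
For convexity, only the cubic constraint needs work. Where `x³ > c` it reads
`S ≥ g(x) = x² - c / x`, and `g` is convex on `x³ ≥ c`, where it is nonnegative; so every
point of the region lies above the tangent line to `g` at such an `x`, while to the left of the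
zero `c^{1/3}` of `g` that tangent line is negative and `S ≥ 0` suffices. Averaging the tangent
inequalities at the `x`-coordinate of a convex combination gives the constraint there.
-/

def region (c : ℝ) : Set (ℝ × ℝ) :=
  {p | 0 ≤ p.1 ∧ 0 ≤ p.2 ∧ p.2 ≤ p.1 ∧ 0 ≤ c - p.1 ^ 3 + p.1 * p.2}

theorem isClosed_region (c : ℝ) : IsClosed (region c) := by
  simp only [region, Set.ofPred_and]
  refine (isClosed_le continuous_const continuous_fst).inter
    ((isClosed_le continuous_const continuous_snd).inter
      ((isClosed_le continuous_snd continuous_fst).inter (isClosed_le continuous_const ?_)))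
  fun_prop

theorem fst_le_of_mem_region {c : ℝ} {p : ℝ × ℝ} (hp : p ∈ region c) : p.1 ≤ |c| + 1 := by
  obtain ⟨hx, -, hSx, hmem⟩ := hp
  by_contra! h
  have hx1 : 1 ≤ p.1 := by linarith [abs_nonneg c]
  have hsq : 1 ≤ p.1 ^ 2 := one_le_pow₀ hx1
  nlinarith [le_abs_self c, mul_le_mul_of_nonneg_left hSx hx,
    mul_le_mul_of_nonneg_left hsq (sub_nonneg.2 hx1)]

theorem region_subset_box (c : ℝ) :
    region c ⊆ Set.Icc 0 (|c| + 1) ×ˢ Set.Icc 0 (|c| + 1) := fun _ hp =>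
  ⟨⟨hp.1, fst_le_of_mem_region hp⟩, hp.2.1, hp.2.2.1.trans (fst_le_of_mem_region hp)⟩

theorem isCompact_region (c : ℝ) : IsCompact (region c) :=
  (isCompact_Icc.prod isCompact_Icc).of_isClosed_subset (isClosed_region c) (region_subset_box c)

/-- The tangent line to `g(t) = t² - c / t` at `x`, multiplied through by `x²`, lies below the
region. -/
theorem tangent_le_of_mem_region {c x : ℝ} {p : ℝ × ℝ} (hx : 0 < x) (hcx : c ≤ x ^ 3)
    (hp : p ∈ region c) : (2 * x ^ 3 + c) * p.1 - x ^ 4 - 2 * c * x ≤ x ^ 2 * p.2 := by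
  obtain ⟨ht, hs, -, hmem⟩ := hp
  rcases le_or_gt c (x ^ 2 * p.1) with h | h
  · rcases ht.eq_or_lt with h0 | htpos
    · rw [← h0] at hmem h ⊢
      nlinarith [mul_nonneg (sq_nonneg x) hs]
    · -- `p.1 (x² g(p.1) - T) = (x - p.1)² (x² p.1 - c)`, with `T` the left-hand side of the goal
      have key : p.1 * ((2 * x ^ 3 + c) * p.1 - x ^ 4 - 2 * c * x) ≤ p.1 * (x ^ 2 * p.2) := by
        nlinarith [mul_nonneg (sq_nonneg (x - p.1)) (sub_nonneg.2 h),
          mul_nonneg (sq_nonneg x) hmem]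
      exact le_of_mul_le_mul_left key htpos
  · have hc : 0 < c := by nlinarith [mul_nonneg (sq_nonneg x) ht]
    nlinarith [mul_nonneg (sq_nonneg x) hs,
      mul_le_mul_of_nonneg_left h.le (by positivity : (0 : ℝ) ≤ 2 * x ^ 3 + c),
      mul_nonneg (sub_nonneg.2 hcx) (by positivity : (0 : ℝ) ≤ x ^ 3 + c)]

theorem convex_region {c : ℝ} (hc : 0 ≤ c) : Convex ℝ (region c) := by
  rintro p hp q hq a b ha hb hab
  have tp := fun x hx hcx => tangent_le_of_mem_region (x := x) hx hcx hp
  have tq := fun x hx hcx => tangent_le_of_mem_region (x := x) hx hcx hq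
  obtain ⟨hp1, hp2, hp3, -⟩ := hp
  obtain ⟨hq1, hq2, hq3, -⟩ := hq
  simp only [region, Set.mem_ofPred_eq, Prod.fst_add, Prod.snd_add, Prod.smul_fst,
    Prod.smul_snd, smul_eq_mul]
  refine ⟨by positivity, by positivity, by gcongr, ?_⟩
  have hx0 : 0 ≤ a * p.1 + b * q.1 := by positivity
  have hS0 : 0 ≤ a * p.2 + b * q.2 := by positivity
  generalize hxd : a * p.1 + b * q.1 = x at hx0 ⊢
  generalize hSd : a * p.2 + b * q.2 = S at hS0 ⊢
  rcases le_or_gt (x ^ 3) c with hxc | hcx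
  · nlinarith [mul_nonneg hx0 hS0]
  have hx : 0 < x := lt_of_pow_lt_pow_left₀ 3 hx0 (by simpa using hc.trans_lt hcx)
  have hsum : x * (x ^ 3 - c) ≤ x * (x * S) := by
    linear_combination mul_le_mul_of_nonneg_left (tp x hx hcx.le) ha +
      mul_le_mul_of_nonneg_left (tq x hx hcx.le) hb + (x ^ 4 + 2 * c * x) * hab -
      (2 * x ^ 3 + c) * hxd + x ^ 2 * hSd
  linarith [le_of_mul_le_mul_left hsum hx]

theorem stmt_9_general (lam d : ℝ) (hlam : 0 < lam) (hd : 0 < d) :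
    IsCompact {p : ℝ × ℝ | 0 ≤ p.1 ∧ 0 ≤ p.2 ∧ p.2 ≤ p.1 ∧
        0 ≤ 2 * d * lam - p.1 ^ 3 + p.1 * p.2} ∧
    Convex ℝ {p : ℝ × ℝ | 0 ≤ p.1 ∧ 0 ≤ p.2 ∧ p.2 ≤ p.1 ∧
        0 ≤ 2 * d * lam - p.1 ^ 3 + p.1 * p.2} :=
  ⟨isCompact_region _, convex_region (by positivity)⟩

/-- The set `R = {(x, S) ∈ ℝ²_{≥0} : S ≤ x, P(x, S) ≥ 0}`, with
`P(x, S) = 2dλ − x³ + xS`, is a compact and convex subset of `ℝ²`. -/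
theorem stmt_9 (lam d : ℝ) (hlam : 0 < lam) (hd : 0 < d)
    (Sstar : ℝ) (hSstar : 0 < Sstar)
    (hSstarroot : 2 * d * lam - Sstar ^ 3 + Sstar * Sstar = 0)
    (hSstaruniq : ∀ z, 0 < z → 2 * d * lam - z ^ 3 + z * z = 0 → z = Sstar) :
    IsCompact {p : ℝ × ℝ | 0 ≤ p.1 ∧ 0 ≤ p.2 ∧ p.2 ≤ p.1 ∧
        0 ≤ 2 * d * lam - p.1 ^ 3 + p.1 * p.2} ∧
    Convex ℝ {p : ℝ × ℝ | 0 ≤ p.1 ∧ 0 ≤ p.2 ∧ p.2 ≤ p.1 ∧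
        0 ≤ 2 * d * lam - p.1 ^ 3 + p.1 * p.2} :=
  stmt_9_general lam d hlam hd
end

section
/- Let λ, d > 0, P(x, S) = 2dλ − x³ + xS, S* the unique positive solution of P(x, x) = 0, R = {(x, S) ∈ ℝ²_{≥0} : S ≤ x, P(x, S) ≥ 0}, and suppose η < min{2/(3(S*+1)²), 2/max_{(x,S)∈R} P(x, S)}. Let x_0 = S_0 = 0, x_{t+1} = x_t + (η/2) P(x_t, S_t), S_{t+1} = S_t + (η²/4) P(x_t, S_t)², let S_∞ = lim_t S_t, and let C_∞ = ℓ_{S_∞} / (2(2dλ)^{2/3} + 2dλ/ℓ_{S_∞}). Then for every t ≥ 0, ℓ_{S_{t+1}} − ℓ_{S_t} ≤ C_∞ (x_{t+1} − x_t)². -/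
/-!
Subtracting the defining equations `ℓ³ = c + ℓ s` of two roots `a = ℓ_s`, `b = ℓ_{s'}` gives
`(b - a) (a + b + c / (a b)) = s' - s`. Since `S_t` increases to `S_∞` and `ℓ` is increasing,
`ℓ_0 ≤ a ≤ b ≤ ℓ_{S_∞}`, so the factor `a + b + c / (a b)` is at least
`2 ℓ_0² / ℓ_{S_∞} + c / ℓ_{S_∞}² = 1 / C_∞` (using `ℓ_0³ = c = 2dλ`), while
`s' - s = S_{t+1} - S_t = (x_{t+1} - x_t)²` by the two update rules.
-/

section CubicRoot

variable {c a b s s' : ℝ}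

theorem cubic_root_sub_mul (ha : 0 < a) (hb : 0 < b) (hra : c - a ^ 3 + a * s = 0)
    (hrb : c - b ^ 3 + b * s' = 0) : (b - a) * (a + b + c / (a * b)) = s' - s := by
  field_simp
  linear_combination b * hra - a * hrb

theorem cubic_root_le_of_le (hc : 0 ≤ c) (ha : 0 < a) (hb : 0 < b)
    (hra : c - a ^ 3 + a * s = 0) (hrb : c - b ^ 3 + b * s' = 0) (hss' : s ≤ s') : a ≤ b := by
  have hfac : 0 < a + b + c / (a * b) := by positivity
  have h := cubic_root_sub_mul ha hb hra hrb
  exact sub_nonneg.1 (nonneg_of_mul_nonneg_left (h ▸ sub_nonneg.2 hss') hfac)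

theorem div_le_add_add_div_mul {m L : ℝ} (hc : 0 ≤ c) (hm : 0 < m) (hma : m ≤ a) (hab : a ≤ b)
    (hbL : b ≤ L) : (2 * m ^ 2 + c / L) / L ≤ a + b + c / (a * b) := by
  have ha : 0 < a := hm.trans_le hma
  have hb : 0 < b := ha.trans_le hab
  have hL : 0 < L := hb.trans_le hbL
  have hsq : 2 * m ^ 2 / L ≤ a + b := by
    rw [div_le_iff₀ hL]
    nlinarith [mul_le_mul_of_nonneg_left (hma.trans (hab.trans hbL)) hm.le,
      mul_le_mul_of_nonneg_right hma hL.le, mul_le_mul_of_nonneg_right (hma.trans hab) hL.le]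
  have hprod : c / L / L ≤ c / (a * b) := by
    rw [div_div]
    exact div_le_div_of_nonneg_left hc (by positivity) (mul_le_mul (hab.trans hbL) hbL hb.le hL.le)
  calc (2 * m ^ 2 + c / L) / L = 2 * m ^ 2 / L + c / L / L := add_div _ _ _
    _ ≤ a + b + c / (a * b) := add_le_add hsq hprod

theorem cubic_root_sub_le {m L : ℝ} (hc : 0 ≤ c) (hm : 0 < m) (hma : m ≤ a) (hab : a ≤ b)
    (hbL : b ≤ L) (hra : c - a ^ 3 + a * s = 0) (hrb : c - b ^ 3 + b * s' = 0) :
    b - a ≤ L / (2 * m ^ 2 + c / L) * (s' - s) := by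
  have ha : 0 < a := hm.trans_le hma
  have hb : 0 < b := ha.trans_le hab
  have hL : 0 < L := hb.trans_le hbL
  rw [← cubic_root_sub_mul ha hb hra hrb]
  calc b - a = L / (2 * m ^ 2 + c / L) * ((b - a) * ((2 * m ^ 2 + c / L) / L)) := by
        field_simp
    _ ≤ L / (2 * m ^ 2 + c / L) * ((b - a) * (a + b + c / (a * b))) := by
        gcongr
        exact div_le_add_add_div_mul hc hm hma hab hbL

end CubicRoot

theorem monotoneOn_of_cubic_root {c : ℝ} {ℓ : ℝ → ℝ} (hc : 0 ≤ c)
    (hpos : ∀ s, 0 ≤ s → 0 < ℓ s) (hroot : ∀ s, 0 ≤ s → c - ℓ s ^ 3 + ℓ s * s = 0) :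
    MonotoneOn ℓ (Set.Ici 0) := fun s hs s' hs' hss' =>
  cubic_root_le_of_le hc (hpos s hs) (hpos s' hs') (hroot s hs) (hroot s' hs') hss'

theorem stmt_17_general (lam d η : ℝ)
    (ℓ : ℝ → ℝ)
    (hℓpos : ∀ s, 0 ≤ s → 0 < ℓ s)
    (hℓroot : ∀ s, 0 ≤ s → 2 * d * lam - (ℓ s) ^ 3 + ℓ s * s = 0)
    (x S : ℕ → ℝ) (hS0 : S 0 = 0)
    (hx : ∀ t, x (t + 1) = x t + (η / 2) * (2 * d * lam - (x t) ^ 3 + x t * S t))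
    (hS : ∀ t, S (t + 1) = S t + (η ^ 2 / 4) * (2 * d * lam - (x t) ^ 3 + x t * S t) ^ 2)
    (Sinf : ℝ) (hSinf : Filter.Tendsto S Filter.atTop (nhds Sinf)) :
    ∀ t, ℓ (S (t + 1)) - ℓ (S t) ≤
      (ℓ Sinf / (2 * (2 * d * lam) ^ ((2 : ℝ) / 3) + 2 * d * lam / ℓ Sinf))
        * (x (t + 1) - x t) ^ 2 := by
  intro t
  have hSmono : Monotone S :=
    monotone_nat_of_le_succ fun n => hS n ▸ le_add_of_nonneg_right (by positivity)
  have hSnn (n : ℕ) : 0 ≤ S n := hS0 ▸ hSmono n.zero_le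
  have hℓ0 : 0 < ℓ 0 := hℓpos 0 le_rfl
  have hcube : 2 * d * lam = ℓ 0 ^ 3 := by linarith [hℓroot 0 le_rfl]
  have hc : 0 ≤ 2 * d * lam := hcube ▸ by positivity
  have hℓmono := monotoneOn_of_cubic_root hc hℓpos hℓroot
  have hsq : (2 * d * lam) ^ ((2 : ℝ) / 3) = ℓ 0 ^ 2 := by
    rw [hcube, ← Real.rpow_natCast, ← Real.rpow_mul hℓ0.le]
    norm_num
  have hstep : (x (t + 1) - x t) ^ 2 = S (t + 1) - S t := by
    rw [hx t, hS t]
    ring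
  have hSle : S (t + 1) ≤ Sinf := hSmono.ge_of_tendsto hSinf (t + 1)
  rw [hsq, hstep]
  exact cubic_root_sub_le hc hℓ0 (hℓmono (le_refl (0 : ℝ)) (hSnn t) (hSnn t))
    (hℓmono (hSnn t) (hSnn (t + 1)) (hSmono t.le_succ))
    (hℓmono (hSnn (t + 1)) ((hSnn _).trans hSle) hSle) (hℓroot _ (hSnn t)) (hℓroot _ (hSnn _))

/-- Under the step-size bound, with `C_∞ = ℓ_{S_∞} / (2(2dλ)^{2/3} + 2dλ/ℓ_{S_∞})`,
for every `t ≥ 0`: `ℓ_{S_{t+1}} − ℓ_{S_t} ≤ C_∞ (x_{t+1} − x_t)²`. -/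
theorem stmt_17 (lam d η : ℝ) (hlam : 0 < lam) (hd : 0 < d) (hη : 0 < η)
    (Sstar : ℝ) (hSstar : 0 < Sstar)
    (hSstarroot : 2 * d * lam - Sstar ^ 3 + Sstar * Sstar = 0)
    (hSstaruniq : ∀ z, 0 < z → 2 * d * lam - z ^ 3 + z * z = 0 → z = Sstar)
    (Pmax : ℝ)
    (hPmax : IsGreatest ((fun p : ℝ × ℝ => 2 * d * lam - p.1 ^ 3 + p.1 * p.2) ''
      {p : ℝ × ℝ | 0 ≤ p.1 ∧ 0 ≤ p.2 ∧ p.2 ≤ p.1 ∧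
        0 ≤ 2 * d * lam - p.1 ^ 3 + p.1 * p.2}) Pmax)
    (hηbound : η < min (2 / (3 * (Sstar + 1) ^ 2)) (2 / Pmax))
    (ℓ : ℝ → ℝ)
    (hℓpos : ∀ s, 0 ≤ s → 0 < ℓ s)
    (hℓroot : ∀ s, 0 ≤ s → 2 * d * lam - (ℓ s) ^ 3 + ℓ s * s = 0)
    (hℓuniq : ∀ s, 0 ≤ s → ∀ z, 0 < z → 2 * d * lam - z ^ 3 + z * s = 0 → z = ℓ s)
    (x S : ℕ → ℝ) (hx0 : x 0 = 0) (hS0 : S 0 = 0)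
    (hx : ∀ t, x (t + 1) = x t + (η / 2) * (2 * d * lam - (x t) ^ 3 + x t * S t))
    (hS : ∀ t, S (t + 1) = S t + (η ^ 2 / 4) * (2 * d * lam - (x t) ^ 3 + x t * S t) ^ 2)
    (Sinf : ℝ) (hSinf : Filter.Tendsto S Filter.atTop (nhds Sinf)) :
    ∀ t, ℓ (S (t + 1)) - ℓ (S t) ≤
      (ℓ Sinf / (2 * (2 * d * lam) ^ ((2 : ℝ) / 3) + 2 * d * lam / ℓ Sinf))
        * (x (t + 1) - x t) ^ 2 :=
  stmt_17_general lam d η ℓ hℓpos hℓroot x S hS0 hx hS Sinf hSinf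
end

section
/- Let λ, d > 0 and let the sequences (x_t), (y_t) be defined by x_0 = y_0 = 0, x_{t+1} = x_t + η d (λ − x_t y_t), y_{t+1} = y_t + η x_t (λ − x_t y_t). Let P(x, S) = 2dλ − x³ + xS, S* the unique positive solution of P(x, x) = 0, and R = {(x, S) ∈ ℝ²_{≥0} : S ≤ x, P(x, S) ≥ 0}. If η < min{2/(3(S*+1)²), 2/max_{(x,S)∈R} P(x, S)}, then the product x_t y_t converges linearly to λ: there exist C > 0 and 0 < q < 1 such that |x_t y_t − λ| ≤ C q^t for all t ≥ 0. -/
/-!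
Write `r = λ - x y` for the residual and `B = x² - 2 d y` for the balance. One step of the
dynamics multiplies `r` by `1 - η (x² + d y) - η² d x r` and adds `(η d r)²` to `B`. As long as
`0 ≤ B ≤ x` and `r ≥ 0`, the pair `(x, B)` lies in the region `R`, and `2 d λ - x³ + x B = 2 d r`
then forces `x ≤ S*`; the step-size bounds keep the multiplier in `[0, 1)`, so the invariant
propagates and `x` increases. From `t = 1` on, `x ≥ x₁ = η d λ`, so the multiplier is at most
`1 - η (η d λ)²`, which gives linear convergence.
-/

theorem le_of_cube_sub_sq_le {S X : ℝ} (hS : 1 < S) (hX : X ^ 3 - X ^ 2 ≤ S ^ 3 - S ^ 2) :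
    X ≤ S := by
  by_contra! hSX
  nlinarith [mul_pos (sub_pos.2 hSX) (by nlinarith : 0 < X ^ 2 + X * S + S ^ 2 - X - S)]

theorem residual_step (lam d η x y : ℝ) :
    lam - (x + η * d * (lam - x * y)) * (y + η * x * (lam - x * y)) =
      (lam - x * y) * (1 - η * (x ^ 2 + d * y) - η ^ 2 * d * x * (lam - x * y)) := by
  ring

theorem balance_step (lam d η x y : ℝ) :
    (x + η * d * (lam - x * y)) ^ 2 - 2 * d * (y + η * x * (lam - x * y)) =
      x ^ 2 - 2 * d * y + (η * d * (lam - x * y)) ^ 2 := by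
  ring

structure Admissible (lam d x y : ℝ) : Prop where
  x_nonneg : 0 ≤ x
  y_nonneg : 0 ≤ y
  balance_nonneg : 2 * d * y ≤ x ^ 2
  balance_le : x ^ 2 - 2 * d * y ≤ x
  mul_le : x * y ≤ lam

namespace Admissible

variable {lam d η x y : ℝ}

theorem residual_nonneg (h : Admissible lam d x y) : 0 ≤ lam - x * y :=
  sub_nonneg.2 h.mul_le

theorem le_root (h : Admissible lam d x y) (hd : 0 ≤ d) {S : ℝ} (hS : 1 < S)
    (hroot : 2 * d * lam - S ^ 3 + S * S = 0) : x ≤ S := by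
  refine le_of_cube_sub_sq_le hS ?_
  have hx_sq : x * (x ^ 2 - 2 * d * y) ≤ x ^ 2 := by
    nlinarith [mul_le_mul_of_nonneg_left h.balance_le h.x_nonneg]
  nlinarith [mul_nonneg hd h.residual_nonneg]

theorem mul_residual_le_one (h : Admissible lam d x y) (hd : 0 ≤ d) (hη : 0 ≤ η)
    (hηdlam : η * d * lam ≤ 1) : η * d * (lam - x * y) ≤ 1 := by
  nlinarith [mul_nonneg (mul_nonneg hη hd) (mul_nonneg h.x_nonneg h.y_nonneg)]

theorem step_factor_nonneg (h : Admissible lam d x y) (hd : 0 ≤ d) (hη : 0 ≤ η)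
    (hηdlam : η * d * lam ≤ 1) (hηx : η * (3 * x ^ 2 + 2 * x) ≤ 2) :
    0 ≤ 1 - η * (x ^ 2 + d * y) - η ^ 2 * d * x * (lam - x * y) := by
  have hdy : η * (d * y) ≤ η * (x ^ 2 / 2) := by
    gcongr
    linarith [h.balance_nonneg]
  have hcross : η * x * (η * d * (lam - x * y)) ≤ η * x :=
    mul_le_of_le_one_right (mul_nonneg hη h.x_nonneg) (h.mul_residual_le_one hd hη hηdlam)
  nlinarith

theorem step (h : Admissible lam d x y) (hd : 0 ≤ d) (hη : 0 ≤ η)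
    (hηdlam : η * d * lam ≤ 1) (hηx : η * (3 * x ^ 2 + 2 * x) ≤ 2) :
    Admissible lam d (x + η * d * (lam - x * y)) (y + η * x * (lam - x * y)) := by
  have hr := h.residual_nonneg
  have hηdr : 0 ≤ η * d * (lam - x * y) := by positivity
  have hcorr : (η * d * (lam - x * y)) ^ 2 ≤ η * d * (lam - x * y) := by
    rw [sq]
    exact mul_le_of_le_one_left hηdr (h.mul_residual_le_one hd hη hηdlam)
  refine ⟨by linarith [h.x_nonneg], ?_, ?_, ?_, ?_⟩
  · have := mul_nonneg (mul_nonneg hη h.x_nonneg) hr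
    linarith [h.y_nonneg]
  · have := balance_step lam d η x y
    nlinarith [h.balance_nonneg, sq_nonneg (η * d * (lam - x * y))]
  · rw [balance_step]
    linarith [h.balance_le]
  · have := residual_step lam d η x y
    nlinarith [mul_nonneg hr (h.step_factor_nonneg hd hη hηdlam hηx)]

end Admissible

section Orbit

variable {lam d η S : ℝ} {x y : ℕ → ℝ}

theorem admissible_orbit (hlam : 0 ≤ lam) (hd : 0 ≤ d) (hη : 0 ≤ η) (hηdlam : η * d * lam ≤ 1)
    (hS : 1 < S) (hroot : 2 * d * lam - S ^ 3 + S * S = 0) (hηS : η * (3 * S ^ 2 + 2 * S) ≤ 2)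
    (hx0 : x 0 = 0) (hy0 : y 0 = 0)
    (hx : ∀ t, x (t + 1) = x t + η * d * (lam - x t * y t))
    (hy : ∀ t, y (t + 1) = y t + η * x t * (lam - x t * y t)) (t : ℕ) :
    Admissible lam d (x t) (y t) := by
  induction t with
  | zero => exact ⟨by simp [hx0], by simp [hy0], by simp [hx0, hy0], by simp [hx0, hy0],
      by simpa [hx0] using hlam⟩
  | succ t ih =>
    have hxS : x t ≤ S := ih.le_root hd hS hroot
    have hηx : η * (3 * x t ^ 2 + 2 * x t) ≤ 2 :=
      le_trans (by gcongr; linarith [ih.x_nonneg]) hηS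
    rw [hx, hy]
    exact ih.step hd hη hηdlam hηx

theorem orbit_residual_le (hlam : 0 ≤ lam) (hd : 0 ≤ d) (hη : 0 ≤ η)
    (hx0 : x 0 = 0) (hy0 : y 0 = 0)
    (hx : ∀ t, x (t + 1) = x t + η * d * (lam - x t * y t))
    (hy : ∀ t, y (t + 1) = y t + η * x t * (lam - x t * y t))
    (hadm : ∀ t, Admissible lam d (x t) (y t)) (hq : 0 ≤ 1 - η * (η * d * lam) ^ 2) (t : ℕ) :
    lam - x (t + 1) * y (t + 1) ≤ (1 - η * (η * d * lam) ^ 2) ^ t * lam := by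
  have hmono : Monotone x := monotone_nat_of_le_succ fun t => by
    rw [hx]
    linarith [mul_nonneg (mul_nonneg hη hd) (hadm t).residual_nonneg]
  have hx1 : x 1 = η * d * lam := by simp [hx, hx0, hy0]
  have hr1 : lam - x 1 * y 1 = lam := by simp [hx, hy, hx0, hy0]
  have hcontract (t : ℕ) : lam - x (t + 2) * y (t + 2) ≤
      (1 - η * (η * d * lam) ^ 2) * (lam - x (t + 1) * y (t + 1)) := by
    have h := hadm (t + 1)
    have hlow : η * d * lam ≤ x (t + 1) := hx1 ▸ hmono (by omega)
    have hfactor : 1 - η * (x (t + 1) ^ 2 + d * y (t + 1)) -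
        η ^ 2 * d * x (t + 1) * (lam - x (t + 1) * y (t + 1)) ≤ 1 - η * (η * d * lam) ^ 2 := by
      have : (η * d * lam) ^ 2 ≤ x (t + 1) ^ 2 := by gcongr
      have := mul_nonneg (mul_nonneg (mul_nonneg (sq_nonneg η) hd) h.x_nonneg) h.residual_nonneg
      nlinarith [mul_nonneg hd h.y_nonneg]
    rw [hx (t + 1), hy (t + 1), residual_step, mul_comm]
    exact mul_le_mul_of_nonneg_right hfactor h.residual_nonneg
  simpa [hr1] using le_geom (u := fun t => lam - x (t + 1) * y (t + 1)) hq t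
    fun k _ => hcontract k

end Orbit

theorem stmt_19_general (lam d η : ℝ) (hlam : 0 < lam) (hd : 0 < d) (hη : 0 < η)
    (x y : ℕ → ℝ) (hx0 : x 0 = 0) (hy0 : y 0 = 0)
    (hx : ∀ t, x (t + 1) = x t + η * d * (lam - x t * y t))
    (hy : ∀ t, y (t + 1) = y t + η * x t * (lam - x t * y t))
    (Sstar : ℝ)
    (hSstarroot : 2 * d * lam - Sstar ^ 3 + Sstar * Sstar = 0)
    (Pmax : ℝ)
    (hPmax : IsGreatest ((fun p : ℝ × ℝ => 2 * d * lam - p.1 ^ 3 + p.1 * p.2) ''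
      {p : ℝ × ℝ | 0 ≤ p.1 ∧ 0 ≤ p.2 ∧ p.2 ≤ p.1 ∧
        0 ≤ 2 * d * lam - p.1 ^ 3 + p.1 * p.2}) Pmax)
    (hηbound : η < min (2 / (3 * (Sstar + 1) ^ 2)) (2 / Pmax)) :
    ∃ C > 0, ∃ q : ℝ, 0 < q ∧ q < 1 ∧
      ∀ t : ℕ, |x t * y t - lam| ≤ C * q ^ t := by
  have hdlam : 0 < d * lam := mul_pos hd hlam
  have hPmax_ge : 2 * d * lam ≤ Pmax :=
    hPmax.2 ⟨(0, 0), ⟨le_rfl, le_rfl, le_rfl, by simpa using by positivity⟩, by simp⟩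
  have hS : 1 < Sstar := by
    by_contra! hS
    nlinarith [mul_nonneg (sq_nonneg Sstar) (sub_nonneg.2 hS)]
  have hηPmax : η * Pmax < 2 :=
    (lt_div_iff₀ (by linarith)).1 (hηbound.trans_le (min_le_right _ _))
  have hηS : η * (3 * (Sstar + 1) ^ 2) < 2 :=
    (lt_div_iff₀ (by positivity)).1 (hηbound.trans_le (min_le_left _ _))
  have hηdlam : η * d * lam < 1 := by nlinarith
  have hη1 : η < 1 := by nlinarith
  have hadm := admissible_orbit hlam.le hd.le hη.le hηdlam.le hS hSstarroot (by nlinarith)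
    hx0 hy0 hx hy
  set q := 1 - η * (η * d * lam) ^ 2
  have hq0 : 0 < q := by
    have : (η * d * lam) ^ 2 < 1 := by nlinarith [mul_pos hη hdlam]
    nlinarith
  have hq1 : q < 1 := sub_lt_self 1 (by positivity)
  refine ⟨lam / q, by positivity, q, hq0, hq1, fun t => ?_⟩
  rw [abs_sub_comm, abs_of_nonneg (hadm t).residual_nonneg]
  cases t with
  | zero => simpa [hx0, hy0] using le_div_self hlam.le hq0 hq1.le
  | succ t =>
    calc lam - x (t + 1) * y (t + 1) ≤ q ^ t * lam :=
          orbit_residual_le hlam.le hd.le hη.le hx0 hy0 hx hy hadm hq0.le t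
      _ = lam / q * q ^ (t + 1) := by field_simp; ring

/-- Main theorem: for the discretized FA dynamics with zero initialization and step size
`η < min{2/(3(S*+1)²), 2/max_R P}`, the product `x_t y_t` converges linearly to `λ`:
there exist `C > 0` and `0 < q < 1` with `|x_t y_t − λ| ≤ C q^t` for all `t`. -/
theorem stmt_19 (lam d η : ℝ) (hlam : 0 < lam) (hd : 0 < d) (hη : 0 < η)
    (x y : ℕ → ℝ) (hx0 : x 0 = 0) (hy0 : y 0 = 0)
    (hx : ∀ t, x (t + 1) = x t + η * d * (lam - x t * y t))
    (hy : ∀ t, y (t + 1) = y t + η * x t * (lam - x t * y t))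
    (Sstar : ℝ) (hSstar : 0 < Sstar)
    (hSstarroot : 2 * d * lam - Sstar ^ 3 + Sstar * Sstar = 0)
    (hSstaruniq : ∀ z, 0 < z → 2 * d * lam - z ^ 3 + z * z = 0 → z = Sstar)
    (Pmax : ℝ)
    (hPmax : IsGreatest ((fun p : ℝ × ℝ => 2 * d * lam - p.1 ^ 3 + p.1 * p.2) ''
      {p : ℝ × ℝ | 0 ≤ p.1 ∧ 0 ≤ p.2 ∧ p.2 ≤ p.1 ∧
        0 ≤ 2 * d * lam - p.1 ^ 3 + p.1 * p.2}) Pmax)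
    (hηbound : η < min (2 / (3 * (Sstar + 1) ^ 2)) (2 / Pmax)) :
    ∃ C > 0, ∃ q : ℝ, 0 < q ∧ q < 1 ∧
      ∀ t : ℕ, |x t * y t - lam| ≤ C * q ^ t :=
  stmt_19_general lam d η hlam hd hη x y hx0 hy0 hx hy Sstar hSstarroot Pmax hPmax hηbound
end
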